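/- Let (λ₁, λ₂) be a pair of random variables with joint density p(ℓ₁, ℓ₂) = Σ_{i=1}^p Σ_{ε=±1} φ(ℓ₁) q_{i,ε}(ℓ₂) 𝟙{0 ≤ ℓ₂ ≤ ℓ₁} (with respect to Lebesgue measure on ℝ²), where φ is the standard normal density and the q_{i,ε} are nonnegative integrable functions. Then the statistic S := Φ̄(λ₁)/Φ̄(λ₂) is uniformly distributed on [0,1]. -/

import Mathlib

/-!
Integrate out `ℓ₁` first (Tonelli). For fixed `ℓ₂ ≥ 0` and `t ∈ [0,1]`, the event `S ≤ t` is
`{ℓ₁ | Φ̄(ℓ₁) ≤ t Φ̄(ℓ₂)}`, which already forces `ℓ₁ ≥ ℓ₂`, and its `φ`-mass is `t Φ̄(ℓ₂)`.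
Hence `P(S ≤ t) = t · ∫_{ℓ₂ ≥ 0} Φ̄(ℓ₂) Q(ℓ₂) dℓ₂` with `Q = Σ q_{i,ε}`, and taking `t = 1`
identifies that integral with the total mass `1`.
-/

open MeasureTheory Real Set

/-- Standard normal density. -/
noncomputable def phi (x : ℝ) : ℝ := (Real.sqrt (2 * Real.pi))⁻¹ * Real.exp (-x ^ 2 / 2)

/-- Upper tail of the standard normal distribution. -/
noncomputable def Phibar (x : ℝ) : ℝ := ∫ t in Set.Ioi x, phi t

/-- Inverse of the upper tail function `Φ̄ : ℝ → (0,1)`. -/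
noncomputable def PhibarInv : ℝ → ℝ := Function.invFun Phibar

/-- The function `h_α`. -/
noncomputable def halpha (α ℓ : ℝ) : ℝ := PhibarInv (α * Phibar ℓ) - ℓ

open scoped ENNReal

lemma phi_eq_gaussianPDFReal : phi = ProbabilityTheory.gaussianPDFReal 0 1 := by
  ext x
  simp [phi, ProbabilityTheory.gaussianPDFReal]

lemma phi_pos (x : ℝ) : 0 < phi x := by
  unfold phi; positivity

lemma continuous_phi : Continuous phi := by
  unfold phi; fun_prop

lemma integrable_phi : Integrable phi := by
  rw [phi_eq_gaussianPDFReal]; exact ProbabilityTheory.integrable_gaussianPDFReal 0 1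

lemma Phibar_nonneg (x : ℝ) : 0 ≤ Phibar x :=
  setIntegral_nonneg measurableSet_Ioi fun t _ => (phi_pos t).le

lemma Phibar_sub_Phibar (x y : ℝ) : Phibar x - Phibar y = ∫ t in x..y, phi t :=
  intervalIntegral.integral_Ioi_sub_Ioi' integrable_phi.integrableOn integrable_phi.integrableOn

lemma Phibar_strictAnti : StrictAnti Phibar := fun x y hxy => by
  have := intervalIntegral.intervalIntegral_pos_of_pos_on
    integrable_phi.intervalIntegrable (fun t _ => phi_pos t) hxy
  linarith [Phibar_sub_Phibar x y]

lemma Phibar_pos (x : ℝ) : 0 < Phibar x :=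
  (Phibar_nonneg (x + 1)).trans_lt (Phibar_strictAnti (lt_add_one x))

lemma continuous_Phibar : Continuous Phibar := by
  have h : Phibar = fun x => Phibar 0 - ∫ t in (0 : ℝ)..x, phi t := by
    ext x; rw [← Phibar_sub_Phibar, sub_sub_cancel]
  rw [h]
  exact continuous_const.sub (integrable_phi.continuous_primitive 0)

lemma tendsto_Phibar_atTop : Filter.Tendsto Phibar Filter.atTop (nhds 0) :=
  tendsto_integral_Ioi_zero Filter.tendsto_id

lemma exists_Phibar_eq {a y : ℝ} (ha : 0 < a) (hay : a ≤ Phibar y) : ∃ x, Phibar x = a := by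
  obtain ⟨M, hM⟩ := (tendsto_Phibar_atTop.eventually_lt_const ha).exists
  obtain ⟨x, -, hx⟩ := intermediate_value_uIcc continuous_Phibar.continuousOn
    (show a ∈ uIcc (Phibar y) (Phibar M) from mem_uIcc.2 (Or.inr ⟨hM.le, hay⟩))
  exact ⟨x, hx⟩

lemma lintegral_phi_Ici (c : ℝ) :
    ∫⁻ x in Ici c, ENNReal.ofReal (phi x) = ENNReal.ofReal (Phibar c) := by
  rw [setLIntegral_congr Ioi_ae_eq_Ici.symm, Phibar, ofReal_integral_eq_lintegral_ofReal
    integrable_phi.integrableOn (ae_of_all _ fun t => (phi_pos t).le)]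

lemma lintegral_phi_setOf_Phibar_le {a y : ℝ} (ha : 0 ≤ a) (hay : a ≤ Phibar y) :
    ∫⁻ x in {x | Phibar x ≤ a}, ENNReal.ofReal (phi x) = ENNReal.ofReal a := by
  rcases ha.eq_or_lt with rfl | ha
  · have : {x | Phibar x ≤ 0} = ∅ :=
      eq_empty_of_forall_notMem fun x hx => (Phibar_pos x).not_ge hx
    simp [this]
  obtain ⟨c, rfl⟩ := exists_Phibar_eq ha hay
  have : {x | Phibar x ≤ Phibar c} = Ici c := by ext x; exact Phibar_strictAnti.le_iff_ge
  rw [this, lintegral_phi_Ici]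

def spacingRegion : Set (ℝ × ℝ) := {z | 0 ≤ z.2 ∧ z.2 ≤ z.1}

noncomputable def spacingStat (z : ℝ × ℝ) : ℝ := Phibar z.1 / Phibar z.2

lemma measurableSet_spacingRegion : MeasurableSet spacingRegion :=
  (measurableSet_le measurable_const measurable_snd).inter
    (measurableSet_le measurable_snd measurable_fst)

lemma measurable_spacingStat : Measurable spacingStat :=
  ((continuous_Phibar.comp continuous_fst).div (continuous_Phibar.comp continuous_snd)
    fun _ => (Phibar_pos _).ne').measurable

lemma spacingStat_le_one {z : ℝ × ℝ} (hz : z ∈ spacingRegion) : spacingStat z ≤ 1 :=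
  (div_le_one (Phibar_pos _)).2 (Phibar_strictAnti.antitone hz.2)

lemma mk_mem_spacingStat_le_inter_spacingRegion {t y : ℝ} (ht1 : t ≤ 1) (hy : 0 ≤ y)
    (x : ℝ) :
    (x, y) ∈ spacingStat ⁻¹' Iic t ∩ spacingRegion ↔ Phibar x ≤ t * Phibar y := by
  simp only [mem_inter_iff, mem_preimage, mem_Iic, spacingStat, spacingRegion,
    div_le_iff₀ (Phibar_pos y)]
  refine ⟨fun h => h.1, fun h => ⟨h, hy, Phibar_strictAnti.le_iff_ge.1 ?_⟩⟩
  exact h.trans (mul_le_of_le_one_left (Phibar_pos y).le ht1)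

section ProductDensity

variable {Q : ℝ → ℝ}

lemma lintegral_spacingStat_le_inter_spacingRegion (hQ : AEMeasurable Q) {t : ℝ}
    (ht0 : 0 ≤ t) (ht1 : t ≤ 1) :
    ∫⁻ z in spacingStat ⁻¹' Iic t ∩ spacingRegion,
        ENNReal.ofReal (phi z.1) * ENNReal.ofReal (Q z.2)
      = ENNReal.ofReal t *
          ∫⁻ y in Ici 0, ENNReal.ofReal (Phibar y) * ENNReal.ofReal (Q y) := by
  have hE : MeasurableSet (spacingStat ⁻¹' Iic t ∩ spacingRegion) :=
    (measurable_spacingStat measurableSet_Iic).inter measurableSet_spacingRegion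
  set F : ℝ × ℝ → ℝ≥0∞ := fun z => ENNReal.ofReal (phi z.1) * ENNReal.ofReal (Q z.2)
  have hF : AEMeasurable ((spacingStat ⁻¹' Iic t ∩ spacingRegion).indicator F)
      (volume.prod volume) :=
    ((continuous_phi.comp continuous_fst).measurable.ennreal_ofReal.aemeasurable.mul
      (hQ.ennreal_ofReal.comp_quasiMeasurePreserving
        Measure.quasiMeasurePreserving_snd)).indicator hE
  have hsection (y : ℝ) :
      ∫⁻ x, (spacingStat ⁻¹' Iic t ∩ spacingRegion).indicator F (x, y) = (Ici 0).indicator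
          (fun y => ENNReal.ofReal t * (ENNReal.ofReal (Phibar y) * ENNReal.ofReal (Q y))) y := by
    by_cases hy : 0 ≤ y
    · have hF_mk (x : ℝ) : (spacingStat ⁻¹' Iic t ∩ spacingRegion).indicator F (x, y)
          = {x | Phibar x ≤ t * Phibar y}.indicator
              (fun x => ENNReal.ofReal (phi x) * ENNReal.ofReal (Q y)) x := by
        classical
        rw [indicator_apply, indicator_apply]
        exact if_congr (mk_mem_spacingStat_le_inter_spacingRegion ht1 hy x) rfl rfl
      have hmeas : MeasurableSet {x | Phibar x ≤ t * Phibar y} :=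
        measurableSet_le continuous_Phibar.measurable measurable_const
      rw [lintegral_congr hF_mk, lintegral_indicator hmeas,
        lintegral_mul_const _ continuous_phi.measurable.ennreal_ofReal,
        lintegral_phi_setOf_Phibar_le (mul_nonneg ht0 (Phibar_pos y).le)
          (mul_le_of_le_one_left (Phibar_pos y).le ht1),
        indicator_of_mem (mem_Ici.2 hy), ENNReal.ofReal_mul ht0, mul_assoc]
    · have hF_mk (x : ℝ) : (spacingStat ⁻¹' Iic t ∩ spacingRegion).indicator F (x, y) = 0 :=
        indicator_of_notMem (fun h => hy h.2.1) _
      rw [lintegral_congr hF_mk, lintegral_zero, indicator_of_notMem (show y ∉ Ici 0 from hy)]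
  rw [← lintegral_indicator hE, Measure.volume_eq_prod, lintegral_prod_symm _ hF,
    lintegral_congr hsection, lintegral_indicator measurableSet_Ici,
    lintegral_const_mul' _ _ ENNReal.ofReal_ne_top]

lemma measure_spacingStat_le {μ : Measure (ℝ × ℝ)} (hQ : AEMeasurable Q)
    (hμ : μ = volume.withDensity
      fun z => ENNReal.ofReal (spacingRegion.indicator (fun z => phi z.1 * Q z.2) z))
    {t : ℝ} (ht0 : 0 ≤ t) (ht1 : t ≤ 1) :
    μ (spacingStat ⁻¹' Iic t) = ENNReal.ofReal t * μ univ := by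
  have hμ_apply {S : Set (ℝ × ℝ)} (hS : MeasurableSet S) :
      μ S = ∫⁻ z in S ∩ spacingRegion,
        ENNReal.ofReal (phi z.1) * ENNReal.ofReal (Q z.2) := by
    have hdens : (fun z => ENNReal.ofReal (spacingRegion.indicator (fun z => phi z.1 * Q z.2) z))
        = spacingRegion.indicator fun z => ENNReal.ofReal (phi z.1) * ENNReal.ofReal (Q z.2) := by
      ext z
      by_cases hz : z ∈ spacingRegion <;> simp [hz, ENNReal.ofReal_mul (phi_pos _).le]
    rw [hμ, withDensity_apply _ hS, hdens, ← lintegral_indicator hS, indicator_indicator,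
      lintegral_indicator (hS.inter measurableSet_spacingRegion)]
  have hregion : univ ∩ spacingRegion = spacingStat ⁻¹' Iic 1 ∩ spacingRegion := by
    rw [univ_inter]; exact (inter_eq_right.2 fun _ hz => spacingStat_le_one hz).symm
  rw [hμ_apply (measurable_spacingStat measurableSet_Iic), hμ_apply MeasurableSet.univ, hregion,
    lintegral_spacingStat_le_inter_spacingRegion hQ ht0 ht1,
    lintegral_spacingStat_le_inter_spacingRegion hQ zero_le_one le_rfl, ENNReal.ofReal_one,
    one_mul]

end ProductDensity

lemma eq_restrict_Icc_of_measure_Iic {ν : Measure ℝ} [IsProbabilityMeasure ν]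
    (h : ∀ t ∈ Icc (0 : ℝ) 1, ν (Iic t) = ENNReal.ofReal t) :
    ν = volume.restrict (Icc 0 1) := by
  refine Measure.ext_of_Iic _ _ fun t => ?_
  have hIcc : Iic t ∩ Icc 0 1 = Icc 0 (min t 1) := by
    ext x; simp only [mem_inter_iff, mem_Iic, mem_Icc, le_min_iff]; tauto
  rw [Measure.restrict_apply measurableSet_Iic, hIcc, Real.volume_Icc, sub_zero]
  rcases lt_or_ge t 0 with ht0 | ht0
  · rw [ENNReal.ofReal_of_nonpos (min_le_of_left_le ht0.le)]
    exact measure_mono_null (Iic_subset_Iic.2 ht0.le) (by simpa using h 0 ⟨le_rfl, zero_le_one⟩)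
  rcases le_or_gt t 1 with ht1 | ht1
  · rw [min_eq_left ht1, h t ⟨ht0, ht1⟩]
  · refine le_antisymm (by simpa [min_eq_right ht1.le] using prob_le_one) ?_
    calc ENNReal.ofReal (min t 1) = ν (Iic 1) := by
          rw [min_eq_right ht1.le, h 1 ⟨zero_le_one, le_rfl⟩]
      _ ≤ ν (Iic t) := measure_mono (Iic_subset_Iic.2 ht1.le)

theorem spacing_null_uniform_general {p : ℕ} {Ω : Type*} [MeasurableSpace Ω]
    (P : Measure Ω) [IsProbabilityMeasure P]
    (lam1 lam2 : Ω → ℝ) (hmeas1 : Measurable lam1) (hmeas2 : Measurable lam2)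
    (q : Fin p → Bool → ℝ → ℝ)
    (hq_int : ∀ i ε, MeasureTheory.Integrable (q i ε))
    (hjoint : P.map (fun ω => (lam1 ω, lam2 ω)) =
      (volume : Measure (ℝ × ℝ)).withDensity
        (fun z => ENNReal.ofReal
          (Set.indicator {z : ℝ × ℝ | 0 ≤ z.2 ∧ z.2 ≤ z.1}
            (fun z => ∑ i : Fin p, ∑ ε : Bool, phi z.1 * q i ε z.2) z))) :
    P.map (fun ω => Phibar (lam1 ω) / Phibar (lam2 ω))
      = (volume : Measure ℝ).restrict (Set.Icc 0 1) := by
  set Q : ℝ → ℝ := fun y => ∑ i : Fin p, ∑ ε : Bool, q i ε y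
  have hQ : AEMeasurable Q :=
    Finset.aemeasurable_fun_sum _ fun i _ =>
      Finset.aemeasurable_fun_sum _ fun ε _ => (hq_int i ε).aemeasurable
  have hdensity : P.map (fun ω => (lam1 ω, lam2 ω)) = (volume : Measure (ℝ × ℝ)).withDensity
      fun z => ENNReal.ofReal (spacingRegion.indicator (fun z => phi z.1 * Q z.2) z) := by
    simp only [hjoint, Q, Finset.mul_sum]; rfl
  have hpair : Measurable fun ω => (lam1 ω, lam2 ω) := hmeas1.prodMk hmeas2
  have := Measure.isProbabilityMeasure_map (μ := P) hpair.aemeasurable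
  change P.map (spacingStat ∘ fun ω => (lam1 ω, lam2 ω)) = _
  rw [← Measure.map_map measurable_spacingStat hpair]
  have := Measure.isProbabilityMeasure_map (μ := P.map fun ω => (lam1 ω, lam2 ω))
    measurable_spacingStat.aemeasurable
  refine eq_restrict_Icc_of_measure_Iic fun t ht => ?_
  rw [Measure.map_apply measurable_spacingStat measurableSet_Iic,
    measure_spacingStat_le hQ hdensity ht.1 ht.2, measure_univ, mul_one]

/-- Null distribution of the spacing statistic: if `(λ₁, λ₂)` has joint density
`p(ℓ₁,ℓ₂) = Σ_{i,ε} φ(ℓ₁)·q_{i,ε}(ℓ₂)·𝟙{0 ≤ ℓ₂ ≤ ℓ₁}`, where the `q_{i,ε}` are nonnegative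
integrable functions, then `S = Φ̄(λ₁)/Φ̄(λ₂)` is uniform on `[0,1]`. -/
theorem spacing_null_uniform {p : ℕ} {Ω : Type*} [MeasurableSpace Ω]
    (P : Measure Ω) [IsProbabilityMeasure P]
    (lam1 lam2 : Ω → ℝ) (hmeas1 : Measurable lam1) (hmeas2 : Measurable lam2)
    (q : Fin p → Bool → ℝ → ℝ)
    (hq_nonneg : ∀ i ε x, 0 ≤ q i ε x)
    (hq_int : ∀ i ε, MeasureTheory.Integrable (q i ε))
    (hjoint : P.map (fun ω => (lam1 ω, lam2 ω)) =
      (volume : Measure (ℝ × ℝ)).withDensity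
        (fun z => ENNReal.ofReal
          (Set.indicator {z : ℝ × ℝ | 0 ≤ z.2 ∧ z.2 ≤ z.1}
            (fun z => ∑ i : Fin p, ∑ ε : Bool, phi z.1 * q i ε z.2) z))) :
    P.map (fun ω => Phibar (lam1 ω) / Phibar (lam2 ω))
      = (volume : Measure ℝ).restrict (Set.Icc 0 1) :=
  spacing_null_uniform_general P lam1 lam2 hmeas1 hmeas2 q hq_int hjoint
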